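/- arXiv:2001.07750 — 2 statements merged into one kernel-verified Lean document; each statement's English description precedes it below -/
import Mathlib

section
/- If ψ ∈ PPU(A) satisfies ψ·H[[t⁻¹]] ⊆ H[[t⁻¹]], then ψ ∈ PPU⁻(A), i.e. ψᵢ = 0 for all i > 0. -/
noncomputable section

/-- Finite Laurent polynomials `A[t,t⁻¹]` with coefficients among the bounded operators
on `H`, with convolution product. -/
abbrev LaurentOp (H : Type*) [NormedAddCommGroup H] [InnerProductSpace ℂ H]
    [CompleteSpace H] : Type _ :=
  AddMonoidAlgebra (H →L[ℂ] H) ℤ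

variable {H : Type*} [NormedAddCommGroup H] [InnerProductSpace ℂ H] [CompleteSpace H]

/-- The involution `φ* = Σ tⁱ (φ₋ᵢ)*` on `B(H)[t,t⁻¹]` (with `*` the adjoint). -/
def lstar (φ : LaurentOp H) : LaurentOp H :=
  AddMonoidAlgebra.ofCoeff <| Finsupp.equivMapDomain (Equiv.neg ℤ) (Finsupp.mapRange star (star_zero _) φ.coeff)

/-- The specialization `ε₁(φ) = Σᵢ φᵢ`. -/
def eps1 (φ : LaurentOp H) : H →L[ℂ] H := φ.coeff.sum fun _ a => a

/-- Membership in `PPU(A)`: all coefficients of `φ` lie in the von Neumann algebra `A`,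
`φ` is paraunitary (`φ*φ = φφ* = 1`), and `ε₁(φ) = 1`. -/
def InPPU (A : VonNeumannAlgebra H) (φ : LaurentOp H) : Prop :=
  (∀ i, φ.coeff i ∈ A) ∧ lstar φ * φ = 1 ∧ φ * lstar φ = 1 ∧ eps1 φ = 1

/-- Membership in `PPU⁺(A) = PPU(A) ∩ A[t]`. -/
def InPPUplus (A : VonNeumannAlgebra H) (φ : LaurentOp H) : Prop :=
  InPPU A φ ∧ ∀ i < (0 : ℤ), φ.coeff i = 0

/-- The action of a Laurent polynomial on a two-sided sequence:
`(φx)ᵢ = Σ_k φ_k (x_{i−k})`. -/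
def act (φ : LaurentOp H) (x : ℤ → H) : ℤ → H :=
  fun i => ∑ k ∈ φ.coeff.support, φ.coeff k (x (i - k))

/-- `tⁿH[[t⁻¹]]`: the square-summable sequences (i.e. elements of
`H[[t,t⁻¹]] = ℓ²(ℤ,H)`) vanishing in all degrees `> n`. -/
def Hmn (H : Type*) [NormedAddCommGroup H] [InnerProductSpace ℂ H] [CompleteSpace H]
    (n : ℤ) : Set (ℤ → H) :=
  {x | Memℓp x 2 ∧ ∀ i > n, x i = 0}

/-- `φ·H[[t⁻¹]]`, the image of `H[[t⁻¹]] = t⁰H[[t⁻¹]]` under the action of `φ`. -/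
def actH (φ : LaurentOp H) : Set (ℤ → H) := act φ '' Hmn H 0

/-- `S` is a closed linear subspace of `H[[t,t⁻¹]] = ℓ²(ℤ,H)` which is invariant under
the actions of the commutant `A'` (acting coefficientwise) and of `t⁻¹` (the shift). -/
def IsInvClosed (A : VonNeumannAlgebra H) (S : Set (ℤ → H)) : Prop :=
  (∀ x ∈ S, Memℓp x 2) ∧
  IsClosed {y : lp (fun _ : ℤ => H) 2 | (y : ℤ → H) ∈ S} ∧
  (0 ∈ S) ∧ (∀ x ∈ S, ∀ y ∈ S, x + y ∈ S) ∧ (∀ (c : ℂ), ∀ x ∈ S, c • x ∈ S) ∧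
  (∀ x ∈ S, (fun i => x (i + 1)) ∈ S) ∧
  (∀ ψ ∈ A.commutant, ∀ x ∈ S, (fun i => ψ (x i)) ∈ S)

/-- The orthogonal projection `π_M` onto a closed subspace `M`, as an operator on `H`. -/
def projL (M : Submodule ℂ H) (hM : IsClosed (M : Set H)) : H →L[ℂ] H :=
  haveI : CompleteSpace M := hM.completeSpace_coe
  M.subtypeL.comp (M.orthogonalProjectionOnto)

/-- The element `p_M = tπ_M + π_{Mᗮ}` of `A[t,t⁻¹]`. -/
def pEl (M : Submodule ℂ H) (hM : IsClosed (M : Set H)) : LaurentOp H :=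
  AddMonoidAlgebra.single (1 : ℤ) (projL M hM) +
    AddMonoidAlgebra.single (0 : ℤ) (projL Mᗮ M.isClosed_orthogonal)

/-- The element `t = t·1` of `A[t,t⁻¹]`. -/
def tEl (H : Type*) [NormedAddCommGroup H] [InnerProductSpace ℂ H] [CompleteSpace H] :
    LaurentOp H :=
  AddMonoidAlgebra.single (1 : ℤ) 1

/-- `M` is invariant under every element of the commutant `A'`. -/
def InvariantC (A : VonNeumannAlgebra H) (M : Submodule ℂ H) : Prop :=
  ∀ φ ∈ A.commutant, ∀ x ∈ M, φ x ∈ M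

/--
Let `A` be a von Neumann algebra on `H`.  If `ψ ∈ PPU(A)` satisfies
`ψ·H[[t⁻¹]] ⊆ H[[t⁻¹]]`, then `ψ ∈ PPU⁻(A)`, i.e. `ψᵢ = 0` for all `i > 0`.
-/
theorem stmt9 (A : VonNeumannAlgebra H) (ψ : LaurentOp H) (hψ : InPPU A ψ)
    (h : actH ψ ⊆ Hmn H 0) :
    ∀ i > (0 : ℤ), ψ.coeff i = 0 := by
  intro i hi
  ext v
  -- the delta sequence at 0 with value v
  set x : ℤ → H := fun j => if j = 0 then v else 0 with hx
  have hxmem : x ∈ Hmn H 0 := by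
    constructor
    · refine (memℓp_zero ?_).of_exponent_ge (by norm_num)
      apply Set.Finite.subset (Set.finite_singleton (0 : ℤ))
      intro j hj
      by_contra hj0
      simp only [hx, Set.mem_singleton_iff] at hj0
      exact hj (by simp [hx, hj0])
    · intro j hj
      simp only [hx]; rw [if_neg (by omega)]
  have hact : act ψ x ∈ Hmn H 0 := h ⟨x, hxmem, rfl⟩
  have := hact.2 i hi
  simp only [act, hx] at this
  rw [Finset.sum_eq_single i] at this
  · simpa using this
  · intro k hk hki
    rw [if_neg (by omega)]
    simp
  · intro hni
    simp [Finsupp.notMem_support_iff.mp hni]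
end
end

section
/- The map Ω : φ ↦ φ·H[[t⁻¹]] is a bijection from PPU(A) onto sub(H)_{−∞}^{∞}, and its restriction Ω⁺ is a bijection from PPU⁺(A) onto sub(H)₀^∞. -/
noncomputable section

set_option linter.unusedSectionVars false

variable {H : Type*} [NormedAddCommGroup H] [InnerProductSpace ℂ H] [CompleteSpace H]

namespace Stmt14Aux

set_option linter.unusedSectionVars false

variable {H : Type*} [NormedAddCommGroup H] [InnerProductSpace ℂ H] [CompleteSpace H]

/-! ### Part A: algebraic lemmas about `act`, `lstar`, `eps1` -/

lemma act_eq_sum (φ : LaurentOp H) (x : ℤ → H) (i : ℤ) :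
    act φ x i = φ.coeff.sum fun k B => B (x (i - k)) := rfl

lemma act_zero (x : ℤ → H) : act (0 : LaurentOp H) x = 0 := by
  funext i; simp [act]

lemma act_add (φ ψ : LaurentOp H) (x : ℤ → H) :
    act (φ + ψ) x = act φ x + act ψ x := by
  funext i
  show (φ + ψ).coeff.sum (fun k B => B (x (i - k))) = _
  rw [AddMonoidAlgebra.coeff_add, Finsupp.sum_add_index' (by simp) (by simp)]
  rfl

lemma act_single (k : ℤ) (B : H →L[ℂ] H) (x : ℤ → H) :
    act (AddMonoidAlgebra.single k B : LaurentOp H) x = fun i => B (x (i - k)) := by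
  funext i
  show (AddMonoidAlgebra.single k B).coeff.sum (fun k B => B (x (i - k))) = _
  rw [AddMonoidAlgebra.coeff_single, Finsupp.sum_single_index (by simp)]

lemma act_one (x : ℤ → H) : act (1 : LaurentOp H) x = x := by
  rw [AddMonoidAlgebra.one_def, act_single]
  simp

lemma act_zerov (φ : LaurentOp H) : act φ (0 : ℤ → H) = 0 := by
  funext i; simp [act]

lemma act_mul (φ ψ : LaurentOp H) (x : ℤ → H) :
    act (φ * ψ) x = act φ (act ψ x) := by
  induction φ using AddMonoidAlgebra.induction_linear with
  | zero => simp [act_zero, zero_mul]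
  | add f g hf hg => rw [add_mul, act_add, act_add, hf, hg]
  | single a B =>
    induction ψ using AddMonoidAlgebra.induction_linear with
    | zero => rw [mul_zero, act_zero, act_zerov]
    | add f g hf hg =>
      rw [mul_add, act_add, act_add, hf, hg, act_single, act_single, act_single]
      funext i; simp [Pi.add_apply]
    | single b C =>
      rw [AddMonoidAlgebra.single_mul_single, act_single, act_single, act_single]
      funext i
      simp only [ContinuousLinearMap.mul_apply]
      congr 1
      ring_nf

lemma act_addv (φ : LaurentOp H) (x y : ℤ → H) :
    act φ (x + y) = act φ x + act φ y := by
  funext i; simp [act, Finset.sum_add_distrib]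

lemma act_smulv (φ : LaurentOp H) (c : ℂ) (x : ℤ → H) :
    act φ (c • x) = c • act φ x := by
  funext i; simp [act, Finset.smul_sum]

lemma act_shift (φ : LaurentOp H) (x : ℤ → H) :
    act φ (fun i => x (i + 1)) = fun i => act φ x (i + 1) := by
  funext i
  simp only [act]
  apply Finset.sum_congr rfl
  intro k _
  congr 1
  ring_nf

lemma lstar_apply (φ : LaurentOp H) (i : ℤ) : (lstar φ).coeff i = star (φ.coeff (-i)) := rfl

lemma lstar_single (k : ℤ) (B : H →L[ℂ] H) :
    lstar (AddMonoidAlgebra.single k B : LaurentOp H) = AddMonoidAlgebra.single (-k) (star B) := by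
  apply AddMonoidAlgebra.ext; apply Finsupp.ext; intro i
  rw [lstar_apply, AddMonoidAlgebra.coeff_single, AddMonoidAlgebra.coeff_single,
    Finsupp.single_apply, Finsupp.single_apply]
  by_cases h : k = -i
  · subst h; simp
  · rw [if_neg h, if_neg (by omega), star_zero]

lemma lstar_add (φ ψ : LaurentOp H) : lstar (φ + ψ) = lstar φ + lstar ψ := by
  apply AddMonoidAlgebra.ext; apply Finsupp.ext; intro i
  show star ((φ + ψ).coeff (-i)) = (lstar φ).coeff i + (lstar ψ).coeff i
  change star (φ.coeff (-i) + ψ.coeff (-i)) = star (φ.coeff (-i)) + star (ψ.coeff (-i))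
  rw [star_add]

lemma lstar_zero : lstar (0 : LaurentOp H) = 0 := by
  apply AddMonoidAlgebra.ext; apply Finsupp.ext; intro i; simp [lstar_apply]

lemma lstar_one : lstar (1 : LaurentOp H) = 1 := by
  rw [AddMonoidAlgebra.one_def, lstar_single, neg_zero, star_one]

lemma lstar_lstar (φ : LaurentOp H) : lstar (lstar φ) = φ := by
  apply AddMonoidAlgebra.ext; apply Finsupp.ext; intro i; simp [lstar_apply]

lemma lstar_mul (φ ψ : LaurentOp H) : lstar (φ * ψ) = lstar ψ * lstar φ := by
  induction φ using AddMonoidAlgebra.induction_linear with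
  | zero => simp [lstar_zero]
  | add f g hf hg => rw [add_mul, lstar_add, hf, hg, lstar_add, mul_add]
  | single a B =>
    induction ψ using AddMonoidAlgebra.induction_linear with
    | zero => simp [lstar_zero]
    | add f g hf hg => rw [mul_add, lstar_add, hf, hg, lstar_add, add_mul]
    | single b C =>
      rw [AddMonoidAlgebra.single_mul_single, lstar_single, lstar_single, lstar_single,
        AddMonoidAlgebra.single_mul_single]
      rw [star_mul]
      congr 1
      ring

lemma eps1_single (k : ℤ) (B : H →L[ℂ] H) :
    eps1 (AddMonoidAlgebra.single k B : LaurentOp H) = B := by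
  rw [eps1, AddMonoidAlgebra.coeff_single, Finsupp.sum_single_index]; rfl

lemma eps1_add (φ ψ : LaurentOp H) : eps1 (φ + ψ) = eps1 φ + eps1 ψ := by
  rw [eps1, eps1, eps1, AddMonoidAlgebra.coeff_add, Finsupp.sum_add_index' (by simp) (by simp)]

lemma eps1_zero : eps1 (0 : LaurentOp H) = 0 := by simp [eps1]

lemma eps1_one : eps1 (1 : LaurentOp H) = 1 := by
  rw [AddMonoidAlgebra.one_def, eps1_single]

lemma eps1_mul (φ ψ : LaurentOp H) : eps1 (φ * ψ) = eps1 φ * eps1 ψ := by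
  induction φ using AddMonoidAlgebra.induction_linear with
  | zero => simp [eps1_zero]
  | add f g hf hg => rw [add_mul, eps1_add, hf, hg, eps1_add, add_mul]
  | single a B =>
    induction ψ using AddMonoidAlgebra.induction_linear with
    | zero => simp [eps1_zero]
    | add f g hf hg => rw [mul_add, eps1_add, hf, hg, eps1_add, mul_add]
    | single b C =>
      rw [AddMonoidAlgebra.single_mul_single, eps1_single, eps1_single, eps1_single]

lemma eps1_lstar (φ : LaurentOp H) : eps1 (lstar φ) = star (eps1 φ) := by
  induction φ using AddMonoidAlgebra.induction_linear with
  | zero => simp [lstar_zero, eps1_zero]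
  | add f g hf hg => rw [lstar_add, eps1_add, hf, hg, eps1_add, star_add]
  | single a B => rw [lstar_single, eps1_single, eps1_single]

lemma act_vanish_of_bound (φ : LaurentOp H) (d a : ℤ) (hφ : ∀ k, d < k → φ.coeff k = 0)
    (x : ℤ → H) (hx : ∀ i, a < i → x i = 0) : ∀ i, a + d < i → act φ x i = 0 := by
  intro i hi
  apply Finset.sum_eq_zero
  intro k hk
  have hk' : k ≤ d := by
    by_contra h
    exact (Finsupp.mem_support_iff.mp hk) (hφ k (by omega))
  rw [hx (i - k) (by omega), map_zero]

/-! ### Part B: `Memℓp` and `lp` lemmas -/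

lemma two_toReal : (2 : ENNReal).toReal = 2 := by norm_num

lemma memℓp_of_le {f g : ℤ → H} (hg : Memℓp g 2) (C : ℝ) (hC : 0 ≤ C)
    (h : ∀ i, ‖f i‖ ≤ C * ‖g i‖) : Memℓp f 2 := by
  apply memℓp_gen
  have hs : Summable fun i => ‖g i‖ ^ (2 : ENNReal).toReal :=
    hg.summable (by rw [two_toReal]; norm_num)
  apply Summable.of_nonneg_of_le
    (fun i => Real.rpow_nonneg (norm_nonneg _) _)
    (fun i => ?_) (hs.mul_left (C ^ (2 : ENNReal).toReal))
  calc ‖f i‖ ^ (2 : ENNReal).toReal ≤ (C * ‖g i‖) ^ (2 : ENNReal).toReal := by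
        apply Real.rpow_le_rpow (norm_nonneg _) (h i) (by rw [two_toReal]; norm_num)
    _ = C ^ (2 : ENNReal).toReal * ‖g i‖ ^ (2 : ENNReal).toReal :=
        Real.mul_rpow hC (norm_nonneg _)

lemma memℓp_shift {x : ℤ → H} (hx : Memℓp x 2) (k : ℤ) :
    Memℓp (fun i => x (i - k)) 2 := by
  apply memℓp_gen
  have hs : Summable fun i => ‖x i‖ ^ (2 : ENNReal).toReal :=
    hx.summable (by rw [two_toReal]; norm_num)
  exact ((Equiv.subRight k).summable_iff
    (f := fun i => ‖x i‖ ^ (2 : ENNReal).toReal)).mpr hs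

lemma memℓp_shift' {x : ℤ → H} (hx : Memℓp x 2) :
    Memℓp (fun i => x (i + 1)) 2 := by
  have e : (fun i => x (i + 1)) = fun i : ℤ => x (i - (-1)) := by
    funext i; rw [sub_neg_eq_add]
  rw [e]
  exact memℓp_shift hx (-1)

lemma memℓp_clm {x : ℤ → H} (hx : Memℓp x 2) (B : H →L[ℂ] H) :
    Memℓp (fun i => B (x i)) 2 :=
  memℓp_of_le hx ‖B‖ (norm_nonneg _) fun i => B.le_opNorm (x i)

lemma memℓp_act {x : ℤ → H} (hx : Memℓp x 2) (φ : LaurentOp H) :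
    Memℓp (act φ x) 2 := by
  exact Memℓp.finset_sum φ.coeff.support
    (f := fun k => fun i => φ.coeff k (x (i - k)))
    fun k _ => memℓp_clm (memℓp_shift hx k) (φ.coeff k)

lemma memℓp_dirac (k : ℤ) (v : H) : Memℓp (Pi.single k v : ℤ → H) 2 := by
  apply Memℓp.of_exponent_ge (q := 0) _ (by norm_num)
  apply memℓp_zero
  apply (Set.finite_singleton k).subset
  intro j hj
  simp only [Set.mem_setOf_eq, Pi.single_apply] at hj
  by_contra h
  simp only [Set.mem_singleton_iff] at h
  rw [if_neg h] at hj
  exact hj rfl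

lemma memℓp_trunc {x : ℤ → H} (hx : Memℓp x 2) (a : ℤ) :
    Memℓp (fun i => if i ≤ a then x i else 0) 2 := by
  apply memℓp_of_le hx 1 zero_le_one
  intro i
  by_cases h : i ≤ a <;> simp [h]

abbrev Lp2 (H : Type*) [NormedAddCommGroup H] [InnerProductSpace ℂ H] [CompleteSpace H] :=
  lp (fun _ : ℤ => H) 2

lemma continuous_eval (i : ℤ) : Continuous fun y : Lp2 H => (y : ℤ → H) i := by
  apply LipschitzWith.continuous (K := 1)
  intro y z
  rw [edist_dist, edist_dist, dist_eq_norm, dist_eq_norm]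
  have : (y : ℤ → H) i - (z : ℤ → H) i = ((y - z : Lp2 H) : ℤ → H) i := by
    rw [lp.coeFn_sub]; rfl
  rw [this]
  simp only [ENNReal.coe_one, one_mul]
  exact ENNReal.ofReal_le_ofReal (lp.norm_apply_le_norm (by norm_num) _ _)

/-- The action of `φ` on `ℓ²`, as a linear map. -/
def actlm (φ : LaurentOp H) : Lp2 H →ₗ[ℂ] Lp2 H where
  toFun y := ⟨act φ y, memℓp_act (lp.memℓp y) φ⟩
  map_add' y z := by
    apply lp.ext
    have : ((y + z : Lp2 H) : ℤ → H) = (y : ℤ → H) + (z : ℤ → H) := lp.coeFn_add y z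
    simp only []
    rw [this, act_addv]
    rfl
  map_smul' c y := by
    apply lp.ext
    have : ((c • y : Lp2 H) : ℤ → H) = c • (y : ℤ → H) := lp.coeFn_smul c y
    simp only []
    rw [this, act_smulv]
    rfl

lemma actlm_apply (φ : LaurentOp H) (y : Lp2 H) :
    ((actlm φ y : Lp2 H) : ℤ → H) = act φ (y : ℤ → H) := rfl

lemma continuous_actlm (φ : LaurentOp H) : Continuous (actlm φ : Lp2 H →ₗ[ℂ] Lp2 H) := by
  apply LinearMap.continuous_of_seq_closed_graph
  intro u x y hu hy
  apply lp.ext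
  funext i
  have h1 : Filter.Tendsto (fun n => (actlm φ (u n) : ℤ → H) i) Filter.atTop
      (nhds ((y : ℤ → H) i)) := ((continuous_eval i).tendsto _).comp hy
  have h2 : Filter.Tendsto (fun n => (actlm φ (u n) : ℤ → H) i) Filter.atTop
      (nhds ((actlm φ x : ℤ → H) i)) := by
    simp only [actlm_apply, act]
    apply tendsto_finset_sum
    intro k _
    exact ((φ.coeff k).continuous.tendsto _).comp (((continuous_eval (i - k)).tendsto _).comp hu)
  exact tendsto_nhds_unique h1 h2

/-! ### Part C: projections and the von Neumann algebra -/

section Proj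

variable (M : Submodule ℂ H) (hM : IsClosed (M : Set H))

lemma projL_apply (x : H) :
    haveI : CompleteSpace M := hM.completeSpace_coe
    projL M hM x = (M.orthogonalProjectionOnto x : H) := rfl

lemma projL_mem_range (x : H) : projL M hM x ∈ M := by
  haveI : CompleteSpace M := hM.completeSpace_coe
  rw [projL_apply]
  exact (M.orthogonalProjectionOnto x).2

lemma projL_mem_self {x : H} (hx : x ∈ M) : projL M hM x = x := by
  haveI : CompleteSpace M := hM.completeSpace_coe
  rw [projL_apply]
  exact (Submodule.starProjection_eq_self_iff (K := M)).mpr hx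

lemma projL_orth_zero {x : H} (hx : x ∈ Mᗮ) : projL M hM x = 0 := by
  haveI : CompleteSpace M := hM.completeSpace_coe
  rw [projL_apply]
  rw [Submodule.orthogonalProjectionOnto_apply_of_mem_orthogonal hx]
  rfl

lemma projL_orthC_zero {x : H} (hx : x ∈ M) : projL Mᗮ M.isClosed_orthogonal x = 0 :=
  projL_orth_zero Mᗮ _ (Submodule.le_orthogonal_orthogonal M hx)

lemma projL_add_orth : projL M hM + projL Mᗮ M.isClosed_orthogonal = 1 := by
  haveI : CompleteSpace M := hM.completeSpace_coe
  ext x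
  exact Submodule.starProjection_add_starProjection_orthogonal (K := M) x

lemma star_projL : star (projL M hM) = projL M hM := by
  haveI : CompleteSpace M := hM.completeSpace_coe
  exact isSelfAdjoint_starProjection M

lemma sub_projL_mem (x : H) : x - projL M hM x ∈ Mᗮ := by
  haveI : CompleteSpace M := hM.completeSpace_coe
  rw [projL_apply]
  exact M.sub_starProjection_mem_orthogonal x

lemma projL_mem_vN (A : VonNeumannAlgebra H)
    (hInv : ∀ ψ ∈ A.commutant, ∀ x ∈ M, ψ x ∈ M) : projL M hM ∈ A := by
  have horth : ∀ ψ ∈ A.commutant, ∀ w ∈ Mᗮ, ψ w ∈ Mᗮ := by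
    intro ψ hψ w hw
    rw [Submodule.mem_orthogonal]
    intro u hu
    have hstar : star ψ ∈ A.commutant := star_mem hψ
    have h1 : (inner ℂ u (ψ w) : ℂ) = inner ℂ ((star ψ) u) w := by
      rw [ContinuousLinearMap.star_eq_adjoint]
      exact (ContinuousLinearMap.adjoint_inner_left ψ w u).symm
    rw [h1]
    exact (Submodule.mem_orthogonal M w).mp hw _ (hInv _ hstar u hu)
  rw [← A.commutant_commutant]
  rw [VonNeumannAlgebra.mem_commutant_iff]
  intro g hg
  ext x
  show g (projL M hM x) = projL M hM (g x)
  have hdec : g x = g (projL M hM x) + g (x - projL M hM x) := by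
    rw [← map_add]; congr 1; abel
  rw [hdec, map_add, projL_mem_self M hM (hInv g hg _ (projL_mem_range M hM x)),
    projL_orth_zero M hM (horth g hg _ (sub_projL_mem M hM x)), add_zero]

lemma lstar_pEl :
    lstar (pEl M hM) = AddMonoidAlgebra.single (-1 : ℤ) (projL M hM) +
      AddMonoidAlgebra.single (0 : ℤ) (projL Mᗮ M.isClosed_orthogonal) := by
  rw [pEl, lstar_add, lstar_single, lstar_single, star_projL, star_projL, neg_zero]

lemma pEl_products :
    lstar (pEl M hM) * pEl M hM = 1 ∧ pEl M hM * lstar (pEl M hM) = 1 := by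
  set P := projL M hM with hP
  set Q := projL Mᗮ M.isClosed_orthogonal with hQ
  have hPP : P * P = P := by
    ext x; exact projL_mem_self M hM (projL_mem_range M hM x)
  have hQQ : Q * Q = Q := by
    ext x
    exact projL_mem_self Mᗮ M.isClosed_orthogonal
      (projL_mem_range Mᗮ M.isClosed_orthogonal x)
  have hPQ : P * Q = 0 := by
    ext x
    exact projL_orth_zero M hM (projL_mem_range Mᗮ M.isClosed_orthogonal x)
  have hQP : Q * P = 0 := by
    ext x
    exact projL_orthC_zero M (projL_mem_range M hM x)
  have hsum : P + Q = 1 := projL_add_orth M hM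
  constructor
  · rw [lstar_pEl, pEl, add_mul, mul_add, mul_add, AddMonoidAlgebra.single_mul_single,
      AddMonoidAlgebra.single_mul_single, AddMonoidAlgebra.single_mul_single,
      AddMonoidAlgebra.single_mul_single, hPP, hPQ, hQP, hQQ]
    simp only [AddMonoidAlgebra.single_zero, add_zero, zero_add, neg_add_cancel]
    rw [← AddMonoidAlgebra.single_add, hsum, ← AddMonoidAlgebra.one_def]
  · rw [lstar_pEl, pEl, add_mul, mul_add, mul_add, AddMonoidAlgebra.single_mul_single,
      AddMonoidAlgebra.single_mul_single, AddMonoidAlgebra.single_mul_single,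
      AddMonoidAlgebra.single_mul_single, hPP, hPQ, hQP, hQQ]
    simp only [AddMonoidAlgebra.single_zero, add_zero, zero_add, add_neg_cancel]
    rw [← AddMonoidAlgebra.single_add, hsum, ← AddMonoidAlgebra.one_def]

lemma pEl_mem_PPUplus (A : VonNeumannAlgebra H)
    (hInv : ∀ ψ ∈ A.commutant, ∀ x ∈ M, ψ x ∈ M) : InPPUplus A (pEl M hM) := by
  have hP : projL M hM ∈ A := projL_mem_vN M hM A hInv
  have hQ : projL Mᗮ M.isClosed_orthogonal ∈ A := by
    have : projL Mᗮ M.isClosed_orthogonal = 1 - projL M hM := by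
      rw [← projL_add_orth M hM]; abel
    rw [this]
    exact sub_mem (one_mem A) hP
  refine ⟨⟨?_, (pEl_products M hM).1, (pEl_products M hM).2, ?_⟩, ?_⟩
  · intro i
    rw [pEl]
    show (AddMonoidAlgebra.single 1 (projL M hM)).coeff i + (AddMonoidAlgebra.single 0 (projL Mᗮ M.isClosed_orthogonal)).coeff i ∈ A
    rw [AddMonoidAlgebra.coeff_single, AddMonoidAlgebra.coeff_single, Finsupp.single_apply, Finsupp.single_apply]
    split_ifs
    · exact add_mem hP hQ
    · exact add_mem hP (zero_mem A)
    · exact add_mem (zero_mem A) hQ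
    · exact add_mem (zero_mem A) (zero_mem A)
  · rw [pEl, eps1_add, eps1_single, eps1_single]
    exact projL_add_orth M hM
  · intro i hi
    rw [pEl]
    show (AddMonoidAlgebra.single 1 (projL M hM)).coeff i + (AddMonoidAlgebra.single 0 (projL Mᗮ M.isClosed_orthogonal)).coeff i = 0
    rw [AddMonoidAlgebra.coeff_single, AddMonoidAlgebra.coeff_single, Finsupp.single_apply, Finsupp.single_apply, if_neg (by omega), if_neg (by omega), add_zero]

end Proj

section PPU

variable (A : VonNeumannAlgebra H)

lemma InPPU.mul {φ ψ : LaurentOp H} (hφ : InPPU A φ) (hψ : InPPU A ψ) :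
    InPPU A (φ * ψ) := by
  obtain ⟨hφA, hφ1, hφ2, hφe⟩ := hφ
  obtain ⟨hψA, hψ1, hψ2, hψe⟩ := hψ
  refine ⟨?_, ?_, ?_, ?_⟩
  · intro i
    rw [AddMonoidAlgebra.mul_apply]
    apply sum_mem
    intro k _
    apply sum_mem
    intro l _
    dsimp only
    split_ifs
    · exact mul_mem (hφA k) (hψA l)
    · exact zero_mem A
  · rw [lstar_mul, mul_assoc, ← mul_assoc (lstar φ), hφ1, one_mul, hψ1]
  · rw [lstar_mul, mul_assoc, ← mul_assoc ψ, hψ2, one_mul, hφ2]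
  · rw [eps1_mul, hφe, hψe, one_mul]

lemma InPPU.lstar_mem {φ : LaurentOp H} (hφ : InPPU A φ) : InPPU A (lstar φ) := by
  obtain ⟨hφA, hφ1, hφ2, hφe⟩ := hφ
  refine ⟨fun i => by rw [lstar_apply]; exact star_mem (hφA (-i)), ?_, ?_, ?_⟩
  · rw [lstar_lstar, hφ2]
  · rw [lstar_lstar, hφ1]
  · rw [eps1_lstar, hφe, star_one]

lemma InPPU.one : InPPU A (1 : LaurentOp H) := by
  refine ⟨?_, ?_, ?_, eps1_one⟩
  · intro i
    rw [AddMonoidAlgebra.one_def, AddMonoidAlgebra.coeff_single, Finsupp.single_apply]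
    split_ifs
    · exact one_mem A
    · exact zero_mem A
  · rw [lstar_one, one_mul]
  · rw [lstar_one, one_mul]

lemma InPPU.tpow (m : ℤ) : InPPU A (AddMonoidAlgebra.single m 1 : LaurentOp H) := by
  refine ⟨?_, ?_, ?_, ?_⟩
  · intro i
    rw [AddMonoidAlgebra.coeff_single, Finsupp.single_apply]
    split_ifs
    · exact one_mem A
    · exact zero_mem A
  · rw [lstar_single, star_one, AddMonoidAlgebra.single_mul_single, neg_add_cancel, one_mul,
      ← AddMonoidAlgebra.one_def]
  · rw [lstar_single, star_one, AddMonoidAlgebra.single_mul_single, add_neg_cancel, one_mul,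
      ← AddMonoidAlgebra.one_def]
  · rw [eps1_single]

end PPU

/-! ### Part D: structural lemmas -/

section Struct

variable (A : VonNeumannAlgebra H)

lemma act_inv_left {φ : LaurentOp H} (h : lstar φ * φ = 1) (x : ℤ → H) :
    act (lstar φ) (act φ x) = x := by rw [← act_mul, h, act_one]

lemma act_inv_right {φ : LaurentOp H} (h : φ * lstar φ = 1) (x : ℤ → H) :
    act φ (act (lstar φ) x) = x := by rw [← act_mul, h, act_one]

lemma image_act_image (φ ψ : LaurentOp H) (S : Set (ℤ → H)) :
    act φ '' (act ψ '' S) = act (φ * ψ) '' S := by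
  rw [Set.image_image]
  apply Set.image_congr
  intro x _
  rw [act_mul]

lemma act_one_image (S : Set (ℤ → H)) : act (1 : LaurentOp H) '' S = S := by
  have : act (1 : LaurentOp H) = id := funext act_one
  rw [this, Set.image_id]

lemma mem_act_image {φ : LaurentOp H} (h1 : lstar φ * φ = 1) (h2 : φ * lstar φ = 1)
    {S : Set (ℤ → H)} (x : ℤ → H) : x ∈ act φ '' S ↔ act (lstar φ) x ∈ S := by
  constructor
  · rintro ⟨y, hy, rfl⟩
    rw [act_inv_left h1]
    exact hy
  · intro h
    exact ⟨act (lstar φ) x, h, act_inv_right h2 x⟩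

lemma act_commutant {φ : LaurentOp H} (hφA : ∀ i, φ.coeff i ∈ A) {ψ : H →L[ℂ] H}
    (hψ : ψ ∈ A.commutant) (x : ℤ → H) :
    (fun i => ψ (act φ x i)) = act φ (fun i => ψ (x i)) := by
  funext i
  show ψ (∑ k ∈ φ.coeff.support, φ.coeff k (x (i - k))) = ∑ k ∈ φ.coeff.support, φ.coeff k (ψ (x (i - k)))
  rw [map_sum]
  apply Finset.sum_congr rfl
  intro k _
  have := (VonNeumannAlgebra.mem_commutant_iff.mp hψ) (φ.coeff k) (hφA k)
  calc ψ (φ.coeff k (x (i - k))) = (ψ * φ.coeff k) (x (i - k)) := rfl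
    _ = (φ.coeff k * ψ) (x (i - k)) := by rw [this]
    _ = φ.coeff k (ψ (x (i - k))) := rfl

lemma isInvClosed_image {φ : LaurentOp H} (hφ : InPPU A φ) {S : Set (ℤ → H)}
    (hS : IsInvClosed A S) : IsInvClosed A (act φ '' S) := by
  obtain ⟨hml, hcl, hz, hadd, hsmul, hshift, hcomm⟩ := hS
  refine ⟨?_, ?_, ?_, ?_, ?_, ?_, ?_⟩
  · rintro _ ⟨x, hx, rfl⟩
    exact memℓp_act (hml x hx) φ
  · have : {y : Lp2 H | (y : ℤ → H) ∈ act φ '' S} =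
        (actlm (lstar φ)) ⁻¹' {y : Lp2 H | (y : ℤ → H) ∈ S} := by
      ext y
      show (y : ℤ → H) ∈ act φ '' S ↔ ((actlm (lstar φ) y : Lp2 H) : ℤ → H) ∈ S
      rw [actlm_apply]
      exact mem_act_image hφ.2.1 hφ.2.2.1 _
    rw [this]
    exact IsClosed.preimage (continuous_actlm (lstar φ)) hcl
  · exact ⟨0, hz, act_zerov φ⟩
  · rintro _ ⟨x, hx, rfl⟩ _ ⟨y, hy, rfl⟩
    exact ⟨x + y, hadd x hx y hy, act_addv φ x y⟩
  · rintro c _ ⟨x, hx, rfl⟩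
    exact ⟨c • x, hsmul c x hx, act_smulv φ c x⟩
  · rintro _ ⟨x, hx, rfl⟩
    refine ⟨fun i => x (i + 1), hshift x hx, ?_⟩
    rw [act_shift]
  · rintro ψ hψ _ ⟨x, hx, rfl⟩
    refine ⟨fun i => ψ (x i), hcomm ψ hψ x hx, (act_commutant A hφ.1 hψ x).symm⟩

lemma isInvClosed_Hmn (n : ℤ) : IsInvClosed A (Hmn H n) := by
  refine ⟨fun x hx => hx.1, ?_, ⟨zero_memℓp, fun i _ => rfl⟩, ?_, ?_, ?_, ?_⟩
  · have : {y : Lp2 H | (y : ℤ → H) ∈ Hmn H n} =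
        ⋂ (i : ℤ), ⋂ (_ : n < i), {y : Lp2 H | (y : ℤ → H) i = 0} := by
      ext y
      simp only [Set.mem_iInter, Set.mem_setOf_eq, Hmn]
      exact ⟨fun h i hi => h.2 i hi, fun h => ⟨lp.memℓp y, h⟩⟩
    rw [this]
    exact isClosed_iInter fun i => isClosed_iInter fun _ =>
      isClosed_eq (continuous_eval i) continuous_const
  · rintro x ⟨hx1, hx2⟩ y ⟨hy1, hy2⟩
    exact ⟨hx1.add hy1, fun i hi => by
      show x i + y i = 0
      rw [hx2 i hi, hy2 i hi, add_zero]⟩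
  · rintro c x ⟨hx1, hx2⟩
    exact ⟨hx1.const_smul c, fun i hi => by
      show c • x i = 0
      rw [hx2 i hi, smul_zero]⟩
  · rintro x ⟨hx1, hx2⟩
    exact ⟨memℓp_shift' hx1, fun i hi => hx2 (i + 1) (by omega)⟩
  · rintro ψ _ x ⟨hx1, hx2⟩
    exact ⟨memℓp_clm hx1 ψ, fun i hi => by show ψ (x i) = 0; rw [hx2 i hi, map_zero]⟩

lemma isInvClosed_actH {φ : LaurentOp H} (hφ : InPPU A φ) : IsInvClosed A (actH φ) :=
  isInvClosed_image A hφ (isInvClosed_Hmn A 0)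

lemma Hmn_mono {a b : ℤ} (h : a ≤ b) : Hmn H a ⊆ Hmn H b :=
  fun x hx => ⟨hx.1, fun i hi => hx.2 i (by omega)⟩

lemma act_image_Hmn_subset {φ : LaurentOp H} {d a : ℤ} (hd : ∀ k, d < k → φ.coeff k = 0) :
    act φ '' Hmn H a ⊆ Hmn H (a + d) := by
  rintro _ ⟨x, ⟨hx1, hx2⟩, rfl⟩
  exact ⟨memℓp_act hx1 φ, act_vanish_of_bound φ d a hd x hx2⟩

lemma bound_exists (φ : LaurentOp H) : ∃ N : ℕ, ∀ k : ℤ, (N : ℤ) < |k| → φ.coeff k = 0 := by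
  refine ⟨φ.coeff.support.sup fun k => k.natAbs, fun k hk => ?_⟩
  by_contra h
  have hmem : k ∈ φ.coeff.support := Finsupp.mem_support_iff.mpr h
  have h2 : k.natAbs ≤ φ.coeff.support.sup fun k => k.natAbs := by
    simpa using Finset.le_sup (f := fun k : ℤ => k.natAbs) hmem
  rw [Int.abs_eq_natAbs] at hk
  omega

lemma dirac_mem_Hmn0 (v : H) : (Pi.single (0 : ℤ) v : ℤ → H) ∈ Hmn H 0 :=
  ⟨memℓp_dirac _ _, fun j hj => by rw [Pi.single_apply, if_neg (by omega)]⟩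

lemma act_dirac (χ : LaurentOp H) (v : H) (i : ℤ) :
    act χ (Pi.single (0 : ℤ) v) i = χ.coeff i v := by
  simp only [act, Pi.single_apply]
  have hcg : ∀ k ∈ χ.coeff.support, χ.coeff k (if i - k = 0 then v else 0) =
      if k = i then χ.coeff k v else 0 := by
    intro k _
    by_cases h : k = i
    · rw [if_pos h, if_pos (by omega)]
    · rw [if_neg h, if_neg (by omega), map_zero]
  rw [Finset.sum_congr rfl hcg, Finset.sum_ite_eq' χ.coeff.support i fun k => χ.coeff k v]
  by_cases h : i ∈ χ.coeff.support
  · rw [if_pos h]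
  · rw [if_neg h]
    have : χ.coeff i = 0 := Finsupp.notMem_support_iff.mp h
    rw [this]
    rfl

lemma coeff_vanish_of_image_sub {χ : LaurentOp H}
    (h : act χ '' Hmn H 0 ⊆ Hmn H 0) : ∀ i : ℤ, 0 < i → χ.coeff i = 0 := by
  intro i hi
  ext v
  have hmem := h ⟨_, dirac_mem_Hmn0 v, rfl⟩
  have := hmem.2 i hi
  rw [act_dirac] at this
  simpa using this

lemma eq_one_of_actH_eq_Hmn0 {χ : LaurentOp H} (hχ : InPPU A χ)
    (h : actH χ = Hmn H 0) : χ = 1 := by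
  have him : act χ '' Hmn H 0 = Hmn H 0 := h
  have h1 : ∀ i : ℤ, 0 < i → χ.coeff i = 0 := coeff_vanish_of_image_sub him.subset
  have h2 : ∀ i : ℤ, 0 < i → (lstar χ).coeff i = 0 := by
    apply coeff_vanish_of_image_sub
    have : act (lstar χ) '' Hmn H 0 = Hmn H 0 := by
      calc act (lstar χ) '' Hmn H 0 = act (lstar χ) '' (act χ '' Hmn H 0) := by rw [him]
        _ = act (lstar χ * χ) '' Hmn H 0 := image_act_image _ _ _
        _ = Hmn H 0 := by rw [hχ.2.1, act_one_image]
    exact this.subset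
  have h3 : ∀ i : ℤ, i < 0 → χ.coeff i = 0 := by
    intro i hi
    have := h2 (-i) (by omega)
    rw [lstar_apply, neg_neg] at this
    exact star_eq_zero.mp this
  have hs : χ = AddMonoidAlgebra.single 0 (χ.coeff 0) := by
    apply AddMonoidAlgebra.ext; apply Finsupp.ext
    intro i
    rcases lt_trichotomy i 0 with hlt | heq | hgt
    · rw [h3 i hlt, AddMonoidAlgebra.coeff_single, Finsupp.single_apply, if_neg (by omega)]
    · subst heq; rw [AddMonoidAlgebra.coeff_single, Finsupp.single_apply, if_pos rfl]
    · rw [h1 i hgt, AddMonoidAlgebra.coeff_single, Finsupp.single_apply, if_neg (by omega)]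
  have he : eps1 χ = χ.coeff 0 := by
    conv_lhs => rw [hs]
    rw [eps1_single]
  have : χ.coeff 0 = 1 := by rw [← he, hχ.2.2.2]
  rw [hs, this]
  exact (AddMonoidAlgebra.one_def (R := H →L[ℂ] H) (M := ℤ)).symm

lemma injOn_PPU : Set.InjOn (actH (H := H)) {φ : LaurentOp H | InPPU A φ} := by
  intro φ hφ ψ hψ h
  have hχ : InPPU A (lstar ψ * φ) := InPPU.mul A (InPPU.lstar_mem A hψ) hφ
  have him : actH (lstar ψ * φ) = Hmn H 0 := by
    show act (lstar ψ * φ) '' Hmn H 0 = Hmn H 0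
    rw [← image_act_image]
    rw [show act φ '' Hmn H 0 = act ψ '' Hmn H 0 from h]
    rw [image_act_image, hψ.2.1, act_one_image]
  have hone := eq_one_of_actH_eq_Hmn0 A hχ him
  calc φ = (ψ * lstar ψ) * φ := by rw [hψ.2.2.1, one_mul]
    _ = ψ * (lstar ψ * φ) := mul_assoc _ _ _
    _ = ψ := by rw [hone, mul_one]

end Struct

section MapsTo

variable (A : VonNeumannAlgebra H)

lemma Hmn_subset_act_image {φ : LaurentOp H} (h2 : φ * lstar φ = 1) {a : ℤ}
    (hsub : act (lstar φ) '' Hmn H a ⊆ Hmn H 0) : Hmn H a ⊆ act φ '' Hmn H 0 :=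
  fun x hx => ⟨act (lstar φ) x, hsub ⟨x, hx, rfl⟩, act_inv_right h2 x⟩

lemma mapsTo_PPU : Set.MapsTo (actH (H := H)) {φ : LaurentOp H | InPPU A φ}
    {S : Set (ℤ → H) | IsInvClosed A S ∧
      ∃ m n : ℤ, m ≤ n ∧ Hmn H m ⊆ S ∧ S ⊆ Hmn H n} := by
  intro φ hφ
  obtain ⟨N, hN⟩ := bound_exists φ
  refine ⟨isInvClosed_actH A hφ, -(N : ℤ), N, by omega, ?_, ?_⟩
  · apply Hmn_subset_act_image hφ.2.2.1
    have hb : ∀ k : ℤ, (N : ℤ) < k → (lstar φ).coeff k = 0 := by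
      intro k hk
      rw [lstar_apply, hN (-k) (by rw [abs_neg, abs_of_pos (show (0:ℤ) < k by omega)]; omega), star_zero]
    have := act_image_Hmn_subset (a := -(N : ℤ)) hb
    rwa [show -(N : ℤ) + N = 0 by omega] at this
  · have hb : ∀ k : ℤ, (N : ℤ) < k → φ.coeff k = 0 := fun k hk => hN k (by rw [abs_of_pos (show (0:ℤ) < k by omega)]; omega)
    have := act_image_Hmn_subset (a := (0 : ℤ)) hb
    rwa [zero_add] at this

lemma mapsTo_PPUplus : Set.MapsTo (actH (H := H)) {φ : LaurentOp H | InPPUplus A φ}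
    {S : Set (ℤ → H) | IsInvClosed A S ∧
      ∃ n : ℕ, Hmn H 0 ⊆ S ∧ S ⊆ Hmn H (n : ℤ)} := by
  rintro φ ⟨hφ, hpos⟩
  set N : ℕ := φ.coeff.support.sup fun k => k.toNat with hNdef
  have hN : ∀ k : ℤ, (N : ℤ) < k → φ.coeff k = 0 := by
    intro k hk
    by_contra h
    have hmem : k ∈ φ.coeff.support := Finsupp.mem_support_iff.mpr h
    have h2 : k.toNat ≤ N := by
      simpa using Finset.le_sup (f := fun k : ℤ => k.toNat) hmem
    omega
  refine ⟨isInvClosed_actH A hφ, N, ?_, ?_⟩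
  · apply Hmn_subset_act_image hφ.2.2.1
    have hb : ∀ k : ℤ, (0 : ℤ) < k → (lstar φ).coeff k = 0 := by
      intro k hk
      rw [lstar_apply, hpos (-k) (by omega), star_zero]
    have := act_image_Hmn_subset (a := (0 : ℤ)) hb
    rwa [add_zero] at this
  · have := act_image_Hmn_subset (a := (0 : ℤ)) hN
    rwa [zero_add] at this

end MapsTo

section Surj

variable (A : VonNeumannAlgebra H)

lemma shift_nat_mem {S : Set (ℤ → H)} (hS : IsInvClosed A S) {x : ℤ → H} (hx : x ∈ S) :
    ∀ m : ℕ, (fun i => x (i + (m : ℤ))) ∈ S := by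
  intro m
  induction m with
  | zero =>
    have e : (fun i => x (i + ((0 : ℕ) : ℤ))) = x := by funext i; norm_num
    rwa [e]
  | succ m ih =>
    have hsh := hS.2.2.2.2.2.1 _ ih
    have e : (fun i => x (i + 1 + (m : ℤ))) = fun i => x (i + ((m + 1 : ℕ) : ℤ)) := by
      funext i; congr 1; push_cast; ring
    rwa [e] at hsh

lemma mul_nonneg_supp {φ ψ : LaurentOp H} (hφ : ∀ i < (0 : ℤ), φ.coeff i = 0)
    (hψ : ∀ i < (0 : ℤ), ψ.coeff i = 0) : ∀ i < (0 : ℤ), (φ * ψ).coeff i = 0 := by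
  intro i hi
  rw [AddMonoidAlgebra.mul_apply]
  apply Finset.sum_eq_zero
  intro a _
  apply Finset.sum_eq_zero
  intro b _
  dsimp only
  split_ifs with h
  · rcases lt_or_ge a 0 with h1 | h1
    · rw [hφ a h1, zero_mul]
    · rw [hψ b (by omega), mul_zero]
  · rfl

lemma sub_mem_invclosed {S : Set (ℤ → H)} (hS : IsInvClosed A S) {a b : ℤ → H}
    (ha : a ∈ S) (hb : b ∈ S) : a - b ∈ S := by
  have h := hS.2.2.2.1 a ha _ (hS.2.2.2.2.1 (-1) b hb)
  have e : a + (-1 : ℂ) • b = a - b := by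
    funext i
    show a i + ((-1 : ℂ) • b) i = a i - b i
    rw [Pi.smul_apply, neg_smul, one_smul, sub_eq_add_neg]
  rwa [e] at h

lemma surj_plus : ∀ (n : ℕ) (S : Set (ℤ → H)), IsInvClosed A S → Hmn H 0 ⊆ S →
    S ⊆ Hmn H (n : ℤ) → ∃ φ : LaurentOp H, InPPUplus A φ ∧ actH φ = S := by
  intro n
  induction n with
  | zero =>
    intro S hS h0 h1
    rw [Nat.cast_zero] at h1
    refine ⟨1, ⟨InPPU.one A, fun i hi => by
      rw [AddMonoidAlgebra.one_def]
      show (AddMonoidAlgebra.single (0 : ℤ) (1 : H →L[ℂ] H)).coeff i = 0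
      rw [AddMonoidAlgebra.coeff_single, Finsupp.single_apply, if_neg (by omega)]⟩, ?_⟩
    show act 1 '' Hmn H 0 = S
    rw [act_one_image]
    exact Set.Subset.antisymm h0 h1
  | succ n ih =>
    intro S hS h0 h1
    have h1' : S ⊆ Hmn H ((n : ℤ) + 1) := by
      intro x hx
      have := h1 hx
      rwa [Nat.cast_succ] at this
    set W : Submodule ℂ H :=
      { carrier := {v : H | ∃ x ∈ S, x ((n : ℤ) + 1) = v}
        add_mem' := by
          rintro a b ⟨x, hx, rfl⟩ ⟨y, hy, rfl⟩
          exact ⟨x + y, hS.2.2.2.1 x hx y hy, rfl⟩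
        zero_mem' := ⟨0, hS.2.2.1, rfl⟩
        smul_mem' := by
          rintro c a ⟨x, hx, rfl⟩
          exact ⟨c • x, hS.2.2.2.2.1 c x hx, rfl⟩ } with hWdef
    set M : Submodule ℂ H := W.topologicalClosure with hMdef
    have hMc : IsClosed (M : Set H) := W.isClosed_topologicalClosure
    have hWM : ∀ v ∈ W, v ∈ M := fun v hv => W.le_topologicalClosure hv
    have hMinv : ∀ ψ ∈ A.commutant, ∀ v ∈ M, ψ v ∈ M := by
      intro ψ hψ v hv
      have hWsub : ψ '' (W : Set H) ⊆ (W : Set H) := by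
        rintro _ ⟨w, ⟨x, hx, rfl⟩, rfl⟩
        exact ⟨fun i => ψ (x i), hS.2.2.2.2.2.2 ψ hψ x hx, rfl⟩
      have hv1 : v ∈ closure (W : Set H) := by
        rw [← W.topologicalClosure_coe]
        exact hv
      have hv2 : ψ v ∈ closure (ψ '' (W : Set H)) :=
        (image_closure_subset_closure_image ψ.continuous) ⟨v, hv1, rfl⟩
      have hv3 : ψ v ∈ closure (W : Set H) :=
        closure_mono hWsub hv2
      rw [← W.topologicalClosure_coe] at hv3
      exact hv3
    have hpElp := pEl_mem_PPUplus M hMc A hMinv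
    have hpEl := hpElp.1
    have hWd : ∀ v ∈ W, (Pi.single (1 : ℤ) v : ℤ → H) ∈ S := by
      rintro _ ⟨x, hx, rfl⟩
      have hu : (fun i => x (i + (n : ℤ))) ∈ S := shift_nat_mem A hS hx n
      have hd : (fun i => x (i + (n : ℤ))) - Pi.single (1 : ℤ) (x ((n : ℤ) + 1)) ∈ Hmn H 0 := by
        constructor
        · exact (hS.1 _ hu).sub (memℓp_dirac _ _)
        · intro i hi
          simp only [Pi.sub_apply, Pi.single_apply]
          by_cases h : i = 1
          · subst h
            rw [if_pos rfl, show (1 : ℤ) + n = n + 1 by ring, sub_self]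
          · rw [if_neg h, sub_zero]
            exact (h1' hx).2 (i + n) (by omega)
      have hsubS : (fun i => x (i + (n : ℤ))) - Pi.single (1 : ℤ) (x ((n : ℤ) + 1)) ∈ S := h0 hd
      have hrw : (Pi.single (1 : ℤ) (x ((n : ℤ) + 1)) : ℤ → H) =
          (fun i => x (i + (n : ℤ))) -
            ((fun i => x (i + (n : ℤ))) - Pi.single (1 : ℤ) (x ((n : ℤ) + 1))) :=
        (sub_sub_cancel _ _).symm
      rw [hrw]
      exact sub_mem_invclosed A hS hu hsubS
    have hdirac : ∀ v ∈ M, (Pi.single (1 : ℤ) v : ℤ → H) ∈ S := by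
      have hiso : Isometry (fun v : H => (lp.single 2 (1 : ℤ) v : Lp2 H)) := by
        apply Isometry.of_dist_eq
        intro a b
        rw [dist_eq_norm, dist_eq_norm]
        have hsub : (lp.single 2 (1 : ℤ) a : Lp2 H) - lp.single 2 (1 : ℤ) b =
            lp.single 2 (1 : ℤ) (a - b) := by
          apply lp.ext
          funext j
          rw [lp.coeFn_sub, Pi.sub_apply]
          by_cases h : j = 1
          · subst h
            rw [lp.single_apply_self, lp.single_apply_self, lp.single_apply_self]
          · rw [lp.single_apply_ne 2 1 _ h, lp.single_apply_ne 2 1 _ h,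
              lp.single_apply_ne 2 1 _ h, sub_zero]
        rw [hsub]
        exact lp.norm_single (E := fun _ : ℤ => H) (p := 2) (by norm_num) (1 : ℤ) (a - b)
      have hco : ∀ v : H, ((lp.single 2 (1 : ℤ) v : Lp2 H) : ℤ → H) = Pi.single (1 : ℤ) v := by
        intro v
        funext j
        rw [Pi.single_apply]
        by_cases h : j = 1
        · subst h
          rw [lp.single_apply_self, if_pos rfl]
        · rw [lp.single_apply_ne 2 1 _ h, if_neg h]
      have hVc : IsClosed {v : H | (Pi.single (1 : ℤ) v : ℤ → H) ∈ S} := by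
        have heq : {v : H | (Pi.single (1 : ℤ) v : ℤ → H) ∈ S} =
            (fun v : H => (lp.single 2 (1 : ℤ) v : Lp2 H)) ⁻¹'
              {y : Lp2 H | (y : ℤ → H) ∈ S} := by
          ext v
          simp only [Set.mem_preimage, Set.mem_setOf_eq, hco]
        rw [heq]
        exact hS.2.1.preimage hiso.continuous
      intro v hv
      have hv1 : v ∈ closure (W : Set H) := by
        rw [← W.topologicalClosure_coe]
        exact hv
      exact closure_minimal (fun w hw => hWd w hw) hVc hv1
    set p : LaurentOp H := pEl M hMc with hpdef
    set S' := act (lstar p) '' S with hS'def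
    have hS'inv : IsInvClosed A S' := isInvClosed_image A (InPPU.lstar_mem A hpEl) hS
    have hform : ∀ x : ℤ → H, act (lstar p) x =
        fun i => projL M hMc (x (i + 1)) + projL Mᗮ M.isClosed_orthogonal (x i) := by
      intro x
      rw [hpdef, lstar_pEl, act_add, act_single, act_single]
      funext i
      simp only [Pi.add_apply, sub_neg_eq_add, sub_zero]
    have hS'sub : S' ⊆ Hmn H (n : ℤ) := by
      rintro _ ⟨x, hx, rfl⟩
      refine ⟨memℓp_act (hS.1 x hx) _, ?_⟩
      intro i hi
      rw [hform]
      show projL M hMc (x (i + 1)) + projL Mᗮ M.isClosed_orthogonal (x i) = 0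
      by_cases h : ((n : ℤ) + 1) < i
      · rw [(h1' hx).2 (i + 1) (by omega), (h1' hx).2 i (by omega), map_zero, map_zero, add_zero]
      · have hieq : i = (n : ℤ) + 1 := by omega
        subst hieq
        rw [(h1' hx).2 ((n : ℤ) + 1 + 1) (by omega), map_zero,
          projL_orthC_zero M (hWM _ ⟨x, hx, rfl⟩), zero_add]
    have hS'sup : Hmn H 0 ⊆ S' := by
      intro y hy
      have hyS : act p y ∈ S := by
        have hformp : act p y = fun i =>
            projL M hMc (y (i - 1)) + projL Mᗮ M.isClosed_orthogonal (y i) := by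
          rw [hpdef, pEl, act_add, act_single, act_single]
          funext i
          simp only [Pi.add_apply, sub_zero]
        have htrm : (fun i => if i ≤ 0 then
            projL M hMc (y (i - 1)) + projL Mᗮ M.isClosed_orthogonal (y i) else 0) ∈
            Hmn H 0 := by
          refine ⟨memℓp_trunc (Memℓp.add (memℓp_clm (memℓp_shift hy.1 1) _)
            (memℓp_clm hy.1 _)) 0, ?_⟩
          intro i hi
          show (if i ≤ 0 then
            projL M hMc (y (i - 1)) + projL Mᗮ M.isClosed_orthogonal (y i) else 0) = 0
          rw [if_neg (by omega)]
        have hdec : act p y = (fun i => if i ≤ 0 then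
            projL M hMc (y (i - 1)) + projL Mᗮ M.isClosed_orthogonal (y i) else 0)
            + Pi.single (1 : ℤ) (projL M hMc (y 0)) := by
          rw [hformp]
          funext i
          simp only [Pi.add_apply, Pi.single_apply]
          by_cases h : i ≤ 0
          · rw [if_pos h, if_neg (show ¬i = 1 by omega), add_zero]
          · by_cases h2 : i = 1
            · subst h2
              rw [if_neg (by norm_num), if_pos rfl, zero_add,
                show (1 : ℤ) - 1 = 0 by norm_num, hy.2 1 (by norm_num), map_zero, add_zero]
            · rw [if_neg h, if_neg h2, hy.2 (i - 1) (by omega), hy.2 i (by omega),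
                map_zero, map_zero, add_zero]
        rw [hdec]
        exact hS.2.2.2.1 _ (h0 htrm) _ (hdirac _ (projL_mem_range M hMc (y 0)))
      exact ⟨act p y, hyS, act_inv_left hpEl.2.1 y⟩
    obtain ⟨φ', hφ'mem, hφ'act⟩ := ih S' hS'inv hS'sup hS'sub
    refine ⟨p * φ', ⟨InPPU.mul A hpEl hφ'mem.1, mul_nonneg_supp hpElp.2 hφ'mem.2⟩, ?_⟩
    show act (p * φ') '' Hmn H 0 = S
    rw [← image_act_image, (show act φ' '' Hmn H 0 = S' from hφ'act), hS'def,
      image_act_image, hpEl.2.2.1, act_one_image]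

end Surj

section Final

variable (A : VonNeumannAlgebra H)

lemma surjOn_PPUplus : Set.SurjOn (actH (H := H)) {φ : LaurentOp H | InPPUplus A φ}
    {S : Set (ℤ → H) | IsInvClosed A S ∧ ∃ n : ℕ, Hmn H 0 ⊆ S ∧ S ⊆ Hmn H (n : ℤ)} := by
  rintro S ⟨hS, n, hsup, hsub⟩
  obtain ⟨φ, hφ, hact⟩ := surj_plus A n S hS hsup hsub
  exact ⟨φ, hφ, hact⟩

lemma surjOn_PPU : Set.SurjOn (actH (H := H)) {φ : LaurentOp H | InPPU A φ}
    {S : Set (ℤ → H) | IsInvClosed A S ∧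
      ∃ m n : ℤ, m ≤ n ∧ Hmn H m ⊆ S ∧ S ⊆ Hmn H n} := by
  rintro S ⟨hS, m, n, hmn, hsup, hsub⟩
  set τ : LaurentOp H := AddMonoidAlgebra.single m 1 with hτdef
  have hτ : InPPU A τ := InPPU.tpow A m
  set S' := act (lstar τ) '' S with hS'def
  have hS'inv := isInvClosed_image A (InPPU.lstar_mem A hτ) hS
  have hlτ : lstar τ = AddMonoidAlgebra.single (-m) (1 : H →L[ℂ] H) := by
    rw [hτdef, lstar_single, star_one]
  have hform : ∀ x : ℤ → H, act (lstar τ) x = fun i => x (i + m) := by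
    intro x
    rw [hlτ, act_single]
    funext i
    rw [sub_neg_eq_add]
    exact ContinuousLinearMap.one_apply _
  have hS'sub : S' ⊆ Hmn H (((n - m).toNat : ℤ)) := by
    rintro _ ⟨x, hx, rfl⟩
    refine ⟨memℓp_act (hS.1 x hx) _, ?_⟩
    intro i hi
    rw [hform]
    show x (i + m) = 0
    exact (hsub hx).2 (i + m) (by omega)
  have hS'sup : Hmn H 0 ⊆ S' := by
    intro y hy
    have hτy : act τ y ∈ Hmn H m := by
      have hformτ : act τ y = fun i => y (i - m) := by
        rw [hτdef, act_single]
        funext i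
        exact ContinuousLinearMap.one_apply _
      rw [hformτ]
      exact ⟨memℓp_shift hy.1 m, fun i hi => hy.2 (i - m) (by omega)⟩
    exact ⟨act τ y, hsup hτy, act_inv_left hτ.2.1 y⟩
  obtain ⟨φ', hφ'mem, hφ'act⟩ := surj_plus A (n - m).toNat S' hS'inv hS'sup hS'sub
  refine ⟨τ * φ', InPPU.mul A hτ hφ'mem.1, ?_⟩
  show act (τ * φ') '' Hmn H 0 = S
  rw [← image_act_image, (show act φ' '' Hmn H 0 = S' from hφ'act), hS'def,
    image_act_image, hτ.2.2.1, act_one_image]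

end Final

end Stmt14Aux

/--
Let `A` be a von Neumann algebra on `H`.  The map `Ω : φ ↦ φ·H[[t⁻¹]]` is a bijection
from `PPU(A)` onto `sub(H)_{−∞}^{∞}`, and its restriction `Ω⁺` is a bijection from
`PPU⁺(A)` onto `sub(H)₀^∞`.
-/
theorem stmt14 (A : VonNeumannAlgebra H) :
    Set.BijOn (actH (H := H)) {φ : LaurentOp H | InPPU A φ}
      {S : Set (ℤ → H) | IsInvClosed A S ∧
        ∃ m n : ℤ, m ≤ n ∧ Hmn H m ⊆ S ∧ S ⊆ Hmn H n} ∧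
    Set.BijOn (actH (H := H)) {φ : LaurentOp H | InPPUplus A φ}
      {S : Set (ℤ → H) | IsInvClosed A S ∧
        ∃ n : ℕ, Hmn H 0 ⊆ S ∧ S ⊆ Hmn H (n : ℤ)} := by
  constructor
  · exact ⟨Stmt14Aux.mapsTo_PPU A, Stmt14Aux.injOn_PPU A, Stmt14Aux.surjOn_PPU A⟩
  · exact ⟨Stmt14Aux.mapsTo_PPUplus A, (Stmt14Aux.injOn_PPU A).mono fun φ hφ => hφ.1,
      Stmt14Aux.surjOn_PPUplus A⟩
end
end
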